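/- arXiv:1104.0581 — 5 statements merged into one kernel-verified Lean document; each statement's English description precedes it below -/
import Mathlib

section
/- If X is uniformly distributed on [0,1], then the cdf of f_4(X) is y ↦ 1 − √(1−y) for y ∈ [0,1]; that is, f_4(X) is Kumaraswamy-distributed with parameters α = 1, β = 1/2. -/
/-!
Since `4x(1-x) = 1 - (2x-1)²`, the points of `[0,1]` with `4x(1-x) ≤ 1 - s²` are those with
`|2x - 1| ≥ s`, i.e. `[0, (1-s)/2] ∪ [(1+s)/2, 1]`, of total length `1 - s`; take `s = √(1-y)`.
-/

open MeasureTheory Set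

theorem Real.volume_Icc_union_Icc {a b c d : ℝ} (hbc : b ≤ c) :
    volume (Icc a b ∪ Icc c d) = ENNReal.ofReal (b - a) + ENNReal.ofReal (d - c) := by
  have hdisj : AEDisjoint volume (Icc a b) (Icc c d) := by
    refine measure_mono_null (t := Icc c b) (fun x hx => ⟨hx.2.1, hx.1.2⟩) ?_
    rw [Real.volume_Icc, ENNReal.ofReal_eq_zero]
    linarith
  rw [measure_union₀ measurableSet_Icc.nullMeasurableSet hdisj, Real.volume_Icc, Real.volume_Icc]

theorem logistic4_le_one_sub_sq_iff {s : ℝ} (hs : 0 ≤ s) (x : ℝ) :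
    4 * x * (1 - x) ≤ 1 - s ^ 2 ↔ s ≤ 2 * x - 1 ∨ s ≤ 1 - 2 * x := by
  have hsq : 4 * x * (1 - x) = 1 - (2 * x - 1) ^ 2 := by ring
  rw [hsq, sub_le_sub_iff_left, sq_le_sq, abs_of_nonneg hs, le_abs, neg_sub]

theorem logistic4_sublevel_inter_Icc {s : ℝ} (hs0 : 0 ≤ s) :
    {x : ℝ | 4 * x * (1 - x) ≤ 1 - s ^ 2} ∩ Icc 0 1 =
      Icc 0 ((1 - s) / 2) ∪ Icc ((1 + s) / 2) 1 := by
  ext x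
  simp only [mem_inter_iff, mem_ofPred_eq, logistic4_le_one_sub_sq_iff hs0, mem_union, mem_Icc]
  constructor
  · rintro ⟨hright | hleft, hx0, hx1⟩
    · exact Or.inr ⟨by linarith, hx1⟩
    · exact Or.inl ⟨hx0, by linarith⟩
  · rintro (⟨hx0, hx⟩ | ⟨hx, hx1⟩)
    · exact ⟨Or.inr (by linarith), hx0, by linarith⟩
    · exact ⟨Or.inl (by linarith), by linarith, hx1⟩

theorem logistic4_uniform_cdf (y : ℝ) (hy : y ∈ Set.Icc (0:ℝ) 1) :
    ((volume.restrict (Set.Icc (0:ℝ) 1)) {x | 4 * x * (1 - x) ≤ y}).toReal =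
      1 - Real.sqrt (1 - y) := by
  obtain ⟨hy0, hy1⟩ := hy
  set s := Real.sqrt (1 - y)
  have hs0 : 0 ≤ s := Real.sqrt_nonneg _
  have hs1 : s ≤ 1 := Real.sqrt_le_one.mpr (by linarith)
  have hys : y = 1 - s ^ 2 := by rw [Real.sq_sqrt (by linarith)]; ring
  rw [Measure.restrict_apply' measurableSet_Icc, hys, logistic4_sublevel_inter_Icc hs0,
    Real.volume_Icc_union_Icc (by linarith), ENNReal.toReal_add ENNReal.ofReal_ne_top
      ENNReal.ofReal_ne_top, ENNReal.toReal_ofReal (by linarith),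
    ENNReal.toReal_ofReal (by linarith)]
  ring
end

section
/- If X is uniformly distributed on [0,1], then the cdf of f_4(f_4(X)) is y ↦ 1 − √(1 − √y) for y ∈ [0,1]; that is, f_4²(X) is Kumaraswamy-distributed with parameters α = β = 1/2. -/
/-!
Writing `f x = 1 - (1 - 2x)²`, one gets `1 - 2 f x = 2 (1 - 2x)² - 1`, so `y < f (f x)` exactly when
`√((1 - s)/2) < |1 - 2x| < √((1 + s)/2)` with `s = √(1 - y)`. This set consists of two intervals
inside `[0, 1]` of total length `√((1 + s)/2) - √((1 - s)/2)`, and this difference denests to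
`√(1 - √y)` because the product of the two radicals is `√(1 - s²)/2 = √y/2`.
-/

open MeasureTheory Set

def logisticMap (r x : ℝ) : ℝ := r * x * (1 - x)

lemma logisticMap_four_eq (x : ℝ) : logisticMap 4 x = 1 - (1 - 2 * x) ^ 2 := by
  unfold logisticMap; ring

lemma lt_one_sub_sq_iff_abs_lt_sqrt (y z : ℝ) : y < 1 - z ^ 2 ↔ |z| < √(1 - y) := by
  rw [Real.lt_sqrt (abs_nonneg z), sq_abs]
  constructor <;> intro h <;> linarith

lemma lt_logisticMap_four_iff (y x : ℝ) : y < logisticMap 4 x ↔ |1 - 2 * x| < √(1 - y) := by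
  rw [logisticMap_four_eq, lt_one_sub_sq_iff_abs_lt_sqrt]

lemma abs_two_mul_sq_sub_one_lt_iff {s : ℝ} (hs : s ≤ 1) (z : ℝ) :
    |2 * z ^ 2 - 1| < s ↔ √((1 - s) / 2) < |z| ∧ |z| < √((1 + s) / 2) := by
  rw [abs_lt, ← Real.sqrt_sq_eq_abs z, Real.sqrt_lt_sqrt_iff (by linarith),
    Real.sqrt_lt_sqrt_iff (sq_nonneg z)]
  constructor <;> rintro ⟨h₁, h₂⟩ <;> constructor <;> linarith

lemma lt_logisticMap_four_logisticMap_four_iff {y : ℝ} (hy : 0 ≤ y) (x : ℝ) :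
    y < logisticMap 4 (logisticMap 4 x) ↔
      √((1 - √(1 - y)) / 2) < |1 - 2 * x| ∧ |1 - 2 * x| < √((1 + √(1 - y)) / 2) := by
  have hf : 1 - 2 * logisticMap 4 x = 2 * (1 - 2 * x) ^ 2 - 1 := by
    rw [logisticMap_four_eq]; ring
  rw [lt_logisticMap_four_iff, hf, abs_two_mul_sq_sub_one_lt_iff (Real.sqrt_le_one.2 (by linarith))]

lemma setOf_abs_one_sub_two_mul_mem_Ioo {v : ℝ} (hv : 0 ≤ v) (w : ℝ) :
    {x : ℝ | v < |1 - 2 * x| ∧ |1 - 2 * x| < w} =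
      Ioo ((1 - w) / 2) ((1 - v) / 2) ∪ Ioo ((1 + v) / 2) ((1 + w) / 2) := by
  ext x
  simp only [mem_ofPred_eq, mem_union, mem_Ioo]
  rcases le_total x (1 / 2) with hx | hx
  · rw [abs_of_nonneg (by linarith)]
    constructor
    · rintro ⟨h₁, h₂⟩; left; constructor <;> linarith
    · rintro (⟨h₁, h₂⟩ | ⟨h₁, h₂⟩) <;> constructor <;> linarith
  · rw [abs_of_nonpos (by linarith)]
    constructor
    · rintro ⟨h₁, h₂⟩; right; constructor <;> linarith
    · rintro (⟨h₁, h₂⟩ | ⟨h₁, h₂⟩) <;> constructor <;> linarith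

lemma volume_real_setOf_abs_one_sub_two_mul_mem_Ioo {v w : ℝ} (hv : 0 ≤ v) (hvw : v ≤ w) :
    volume.real {x : ℝ | v < |1 - 2 * x| ∧ |1 - 2 * x| < w} = w - v := by
  have hdisj : Disjoint (Ioo ((1 - w) / 2) ((1 - v) / 2)) (Ioo ((1 + v) / 2) ((1 + w) / 2)) :=
    disjoint_left.2 fun _ h₁ h₂ ↦ by linarith [h₁.2, h₂.1]
  rw [setOf_abs_one_sub_two_mul_mem_Ioo hv,
    measureReal_union hdisj measurableSet_Ioo measure_Ioo_lt_top.ne measure_Ioo_lt_top.ne,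
    Real.volume_real_Ioo_of_le (by linarith), Real.volume_real_Ioo_of_le (by linarith)]
  ring

lemma sqrt_half_one_add_sub_sqrt_half_one_sub {s : ℝ} (hs₀ : 0 ≤ s) (hs₁ : s ≤ 1) :
    √((1 + s) / 2) - √((1 - s) / 2) = √(1 - √(1 - s ^ 2)) := by
  have hprod : √((1 + s) / 2) * √((1 - s) / 2) = √(1 - s ^ 2) / 2 := by
    rw [← Real.sqrt_mul (by linarith),
      show (1 + s) / 2 * ((1 - s) / 2) = (1 - s ^ 2) / 2 ^ 2 by ring,
      Real.sqrt_div' _ (by norm_num), Real.sqrt_sq (by norm_num)]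
  have hsq : (√((1 + s) / 2) - √((1 - s) / 2)) ^ 2 = 1 - √(1 - s ^ 2) := by
    rw [sub_sq, Real.sq_sqrt (by linarith), Real.sq_sqrt (by linarith), mul_assoc, hprod]
    ring
  have hle : √((1 - s) / 2) ≤ √((1 + s) / 2) := Real.sqrt_le_sqrt (by linarith)
  rw [← hsq, Real.sqrt_sq (by linarith)]

theorem logistic4_sq_uniform_cdf (y : ℝ) (hy : y ∈ Set.Icc (0:ℝ) 1) :
    ((volume.restrict (Set.Icc (0:ℝ) 1))
        {x | 4 * (4 * x * (1 - x)) * (1 - 4 * x * (1 - x)) ≤ y}).toReal =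
      1 - Real.sqrt (1 - Real.sqrt y) := by
  obtain ⟨hy₀, hy₁⟩ := hy
  have hs₀ : 0 ≤ √(1 - y) := Real.sqrt_nonneg _
  have hs₁ : √(1 - y) ≤ 1 := Real.sqrt_le_one.2 (by linarith)
  have hv₀ : 0 ≤ √((1 - √(1 - y)) / 2) := Real.sqrt_nonneg _
  have hw₁ : √((1 + √(1 - y)) / 2) ≤ 1 := Real.sqrt_le_one.2 (by linarith)
  have : IsProbabilityMeasure (volume.restrict (Icc (0:ℝ) 1)) :=
    ⟨by rw [Measure.restrict_apply_univ, Real.volume_Icc, sub_zero, ENNReal.ofReal_one]⟩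
  set A := {x : ℝ | √((1 - √(1 - y)) / 2) < |1 - 2 * x| ∧ |1 - 2 * x| < √((1 + √(1 - y)) / 2)}
  have hA_compl : {x | logisticMap 4 (logisticMap 4 x) ≤ y} = Aᶜ := by
    ext x
    rw [mem_compl_iff, mem_ofPred_eq, ← not_lt, lt_logisticMap_four_logisticMap_four_iff hy₀]
    rfl
  have hA : MeasurableSet A := by
    rw [show A = _ from setOf_abs_one_sub_two_mul_mem_Ioo hv₀ _]
    exact measurableSet_Ioo.union measurableSet_Ioo
  have hA_sub : A ⊆ Icc 0 1 := fun x ⟨_, hx⟩ ↦ by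
    rw [abs_lt] at hx; constructor <;> linarith
  change (volume.restrict (Icc (0:ℝ) 1)).real {x | logisticMap 4 (logisticMap 4 x) ≤ y} = _
  rw [hA_compl, probReal_compl_eq_one_sub hA, measureReal_restrict_apply hA,
    inter_eq_left.2 hA_sub,
    volume_real_setOf_abs_one_sub_two_mul_mem_Ioo hv₀ (Real.sqrt_le_sqrt (by linarith)),
    sqrt_half_one_add_sub_sqrt_half_one_sub hs₀ hs₁, Real.sq_sqrt (by linarith), sub_sub_cancel]
end

section
/- Let G(y) = 1 − √(1−y) on [0,1]. Then applying the r = 4 propagation operator to G yields G((1−√(1−y))/2) + 1 − G((1+√(1−y))/2) = 1 − √(1 − √y) for all y ∈ [0,1]. -/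
/-! The two values of `G` combine to `√((1+s)/2) - √((1-s)/2)` with `s = √(1-y)`, and this
difference denests: its square is `1 - 2√((1-s²)/4) = 1 - √y`. -/

open Real

theorem sqrt_sub_sqrt_eq_sqrt {a b : ℝ} (hb : 0 ≤ b) (hba : b ≤ a) :
    √a - √b = √(a + b - 2 * √(a * b)) := by
  have ha : 0 ≤ a := hb.trans hba
  have hsq : a + b - 2 * √(a * b) = (√a - √b) ^ 2 := by
    rw [sqrt_mul ha]
    nlinarith [sq_sqrt ha, sq_sqrt hb]
  rw [hsq, sqrt_sq (sub_nonneg.mpr (sqrt_le_sqrt hba))]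

theorem sqrt_half_add_sub_sqrt_half_sub {y : ℝ} (hy0 : 0 ≤ y) (hy1 : y ≤ 1) :
    √((1 + √(1 - y)) / 2) - √((1 - √(1 - y)) / 2) = √(1 - √y) := by
  set s := √(1 - y)
  have hs0 : 0 ≤ s := sqrt_nonneg _
  have hs1 : s ≤ 1 := sqrt_le_one.mpr (by linarith)
  have hss : s ^ 2 = 1 - y := sq_sqrt (by linarith)
  have hprod : 2 * √((1 + s) / 2 * ((1 - s) / 2)) = √y := by
    rw [show (1 + s) / 2 * ((1 - s) / 2) = y / 2 ^ 2 by linear_combination -hss / 4,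
      sqrt_div' _ (by norm_num), sqrt_sq (by norm_num)]
    ring
  rw [sqrt_sub_sqrt_eq_sqrt (by linarith) (by linarith), hprod]
  ring_nf

theorem propagate_kumaraswamy (y : ℝ) (hy : y ∈ Set.Icc (0:ℝ) 1)
    (G : ℝ → ℝ) (hG : ∀ t, G t = 1 - Real.sqrt (1 - t)) :
    G ((1 - Real.sqrt (1 - y)) / 2) + 1 - G ((1 + Real.sqrt (1 - y)) / 2) =
      1 - Real.sqrt (1 - Real.sqrt y) := by
  rw [← sqrt_half_add_sub_sqrt_half_sub hy.1 hy.2, hG, hG]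
  ring_nf
end

section
/- For 0 < r ≤ 4, if F is a cdf on [0,1] (continuous, nondecreasing, F(0)=0, F(1)=1), then the function y ↦ F(1/2 − q_r(y)) + 1 − F(1/2 + q_r(y)), where q_r(y) = √(1/4 − y/r) for y ≤ r/4 and q_r(y) = 0 otherwise, is again a cdf on [0,1]. -/
/-!
If `X ∼ F` on `[0, 1]`, the preimage of `(-∞, y]` under `x ↦ r x (1 - x)` is
`[0, 1/2 - q y] ∪ [1/2 + q y, 1]` with `q y = √(1/4 - y/r)`, so the law of `r X (1 - X)` has cdf
`F (1/2 - q y) + 1 - F (1/2 + q y)`. Everything then follows from `q` decreasing continuously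
from `1/2` at `y = 0` to `0` at `y = 1`, which is where `r ≤ 4` enters.
-/

open Set

noncomputable def foldCDF (F q : ℝ → ℝ) (y : ℝ) : ℝ :=
  F (1/2 - q y) + 1 - F (1/2 + q y)

lemma half_sub_mem_Icc {t : ℝ} (ht : t ∈ Icc (0 : ℝ) (1/2)) : 1/2 - t ∈ Icc (0 : ℝ) 1 :=
  ⟨by linarith [ht.2], by linarith [ht.1]⟩

lemma half_add_mem_Icc {t : ℝ} (ht : t ∈ Icc (0 : ℝ) (1/2)) : 1/2 + t ∈ Icc (0 : ℝ) 1 :=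
  ⟨by linarith [ht.1], by linarith [ht.2]⟩

section foldCDF

variable {F q : ℝ → ℝ} {s : Set ℝ}

lemma continuousOn_foldCDF (hF : ContinuousOn F (Icc 0 1)) (hq : ContinuousOn q s)
    (hqs : MapsTo q s (Icc 0 (1/2))) : ContinuousOn (foldCDF F q) s := by
  have hlow : ContinuousOn (fun y => F (1/2 - q y)) s :=
    hF.comp (continuousOn_const.sub hq) fun y hy => half_sub_mem_Icc (hqs hy)
  have hhigh : ContinuousOn (fun y => F (1/2 + q y)) s :=
    hF.comp (continuousOn_const.add hq) fun y hy => half_add_mem_Icc (hqs hy)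
  exact (hlow.add continuousOn_const).sub hhigh

lemma monotoneOn_foldCDF (hF : MonotoneOn F (Icc 0 1)) (hq : AntitoneOn q s)
    (hqs : MapsTo q s (Icc 0 (1/2))) : MonotoneOn (foldCDF F q) s := by
  intro a ha b hb hab
  have hqab : q b ≤ q a := hq ha hb hab
  have hlow : F (1/2 - q a) ≤ F (1/2 - q b) :=
    hF (half_sub_mem_Icc (hqs ha)) (half_sub_mem_Icc (hqs hb)) (by linarith)
  have hhigh : F (1/2 + q b) ≤ F (1/2 + q a) :=
    hF (half_add_mem_Icc (hqs hb)) (half_add_mem_Icc (hqs ha)) (by linarith)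
  unfold foldCDF
  linarith

lemma mapsTo_foldCDF (hF : MonotoneOn F (Icc 0 1)) (hF0 : F 0 = 0) (hF1 : F 1 = 1)
    (hqs : MapsTo q s (Icc 0 (1/2))) : MapsTo (foldCDF F q) s (Icc 0 1) := by
  intro y hy
  have hlow := half_sub_mem_Icc (hqs hy)
  have hhigh := half_add_mem_Icc (hqs hy)
  have h0 : F 0 ≤ F (1/2 - q y) := hF (left_mem_Icc.2 zero_le_one) hlow hlow.1
  have h1 : F (1/2 + q y) ≤ F 1 := hF hhigh (right_mem_Icc.2 zero_le_one) hhigh.2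
  have hmid : F (1/2 - q y) ≤ F (1/2 + q y) := hF hlow hhigh (by linarith [(hqs hy).1])
  exact ⟨by unfold foldCDF; linarith, by unfold foldCDF; linarith⟩

lemma foldCDF_eq_zero (hF0 : F 0 = 0) (hF1 : F 1 = 1) {y : ℝ} (hy : q y = 1/2) :
    foldCDF F q y = 0 := by
  simp only [foldCDF, hy]
  norm_num [hF0, hF1]

lemma foldCDF_eq_one {y : ℝ} (hy : q y = 0) : foldCDF F q y = 1 := by
  simp only [foldCDF, hy, sub_zero, add_zero]
  ring

end foldCDF

section logistic

variable {r : ℝ}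

lemma ite_le_sqrt_eq_sqrt (hr : 0 < r) (y : ℝ) :
    (if y ≤ r/4 then √(1/4 - y/r) else 0) = √(1/4 - y/r) := by
  split_ifs with hy
  · rfl
  · have : 1/4 < y / r := (lt_div_iff₀ hr).2 (by linarith)
    exact (Real.sqrt_eq_zero'.2 (by linarith)).symm

lemma continuous_sqrt_quarter_sub_div : Continuous fun y : ℝ => √(1/4 - y/r) := by
  fun_prop

lemma antitone_sqrt_quarter_sub_div (hr : 0 ≤ r) :
    Antitone fun y : ℝ => √(1/4 - y/r) := by
  intro a b hab
  have : a / r ≤ b / r := div_le_div_of_nonneg_right hab hr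
  exact Real.sqrt_le_sqrt (by linarith)

lemma mapsTo_sqrt_quarter_sub_div (hr : 0 ≤ r) :
    MapsTo (fun y : ℝ => √(1/4 - y/r)) (Ici 0) (Icc 0 (1/2)) := by
  intro y hy
  have : 0 ≤ y / r := div_nonneg hy hr
  refine ⟨Real.sqrt_nonneg _, ?_⟩
  calc √(1/4 - y/r) ≤ √((1/2) ^ 2) := Real.sqrt_le_sqrt (by linarith)
    _ = 1/2 := Real.sqrt_sq (by norm_num)

lemma sqrt_quarter_sub_zero_div : √(1/4 - 0/r) = 1/2 := by
  rw [zero_div, sub_zero, show (1/4 : ℝ) = (1/2) ^ 2 by norm_num, Real.sqrt_sq (by norm_num)]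

lemma sqrt_quarter_sub_one_div (hr : 0 < r) (hr4 : r ≤ 4) : √(1/4 - 1/r) = 0 := by
  have : 1/4 ≤ 1/r := one_div_le_one_div_of_le hr hr4
  exact Real.sqrt_eq_zero'.2 (by linarith)

end logistic

theorem propagation_is_cdf (r : ℝ) (hr : 0 < r) (hr4 : r ≤ 4)
    (F : ℝ → ℝ) (hFc : ContinuousOn F (Set.Icc 0 1))
    (hFm : MonotoneOn F (Set.Icc 0 1)) (hF0 : F 0 = 0) (hF1 : F 1 = 1) :
    ContinuousOn (fun y : ℝ =>
        F (1/2 - (if y ≤ r/4 then Real.sqrt (1/4 - y/r) else 0)) + 1 -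
        F (1/2 + (if y ≤ r/4 then Real.sqrt (1/4 - y/r) else 0))) (Set.Icc 0 1) ∧
    MonotoneOn (fun y : ℝ =>
        F (1/2 - (if y ≤ r/4 then Real.sqrt (1/4 - y/r) else 0)) + 1 -
        F (1/2 + (if y ≤ r/4 then Real.sqrt (1/4 - y/r) else 0))) (Set.Icc 0 1) ∧
    (F (1/2 - (if (0:ℝ) ≤ r/4 then Real.sqrt (1/4 - 0/r) else 0)) + 1 -
        F (1/2 + (if (0:ℝ) ≤ r/4 then Real.sqrt (1/4 - 0/r) else 0)) = 0) ∧
    (F (1/2 - (if (1:ℝ) ≤ r/4 then Real.sqrt (1/4 - 1/r) else 0)) + 1 -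
        F (1/2 + (if (1:ℝ) ≤ r/4 then Real.sqrt (1/4 - 1/r) else 0)) = 1) ∧
    Set.MapsTo (fun y : ℝ =>
        F (1/2 - (if y ≤ r/4 then Real.sqrt (1/4 - y/r) else 0)) + 1 -
        F (1/2 + (if y ≤ r/4 then Real.sqrt (1/4 - y/r) else 0)))
      (Set.Icc 0 1) (Set.Icc 0 1) := by
  simp only [ite_le_sqrt_eq_sqrt hr]
  have hqs : MapsTo (fun y : ℝ => √(1/4 - y/r)) (Icc 0 1) (Icc 0 (1/2)) :=
    (mapsTo_sqrt_quarter_sub_div hr.le).mono_left fun y hy => hy.1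
  exact ⟨continuousOn_foldCDF hFc continuous_sqrt_quarter_sub_div.continuousOn hqs,
    monotoneOn_foldCDF hFm ((antitone_sqrt_quarter_sub_div hr.le).antitoneOn _) hqs,
    foldCDF_eq_zero hF0 hF1 sqrt_quarter_sub_zero_div,
    foldCDF_eq_one (sqrt_quarter_sub_one_div hr hr4),
    mapsTo_foldCDF hFm hF0 hF1 hqs⟩
end

section
/- The pushforward of the measure on [0,1] with density 1/(π·√(t(1−t))) under the map f_4(x) = 4x(1−x) equals the same measure; i.e., the arcsine (beta(1/2,1/2)) distribution is invariant under the logistic map with r = 4. -/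
/-!
On each of its two monotone branches `[0, 1/2]` and `[1/2, 1]` the map `f x = 4x(1-x)` is a
bijection onto `[0, 1]` with `|f' x| = 4|1 - 2x|`, while `f x (1 - f x) = 4x(1-x)(1-2x)²`.
Hence `|f' x| · ρ (f x) = 2 ρ x` for the arcsine density `ρ`, and the one-dimensional change of
variables shows that each branch pushes the arcsine measure restricted to it forward to half the
arcsine measure. The two halves add up to the whole.
-/

open MeasureTheory Set Real
open scoped ENNReal

theorem MeasureTheory.map_withDensity_eq_withDensity_image {s : Set ℝ} (hs : MeasurableSet s)
    {f f' : ℝ → ℝ} (hf' : ∀ x ∈ s, HasDerivWithinAt f (f' x) s x) (hf : InjOn f s)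
    (hfm : Measurable f) {g h : ℝ → ℝ≥0∞}
    (hh : ∀ x ∈ s, h x = ENNReal.ofReal |f' x| * g (f x)) :
    ((volume.restrict s).withDensity h).map f = (volume.restrict (f '' s)).withDensity g := by
  ext t ht
  have hst : MeasurableSet (f ⁻¹' t ∩ s) := (hfm ht).inter hs
  rw [Measure.map_apply hfm ht, withDensity_apply _ (hfm ht), withDensity_apply _ ht,
    Measure.restrict_restrict (hfm ht), Measure.restrict_restrict ht, ← image_preimage_inter,
    lintegral_image_eq_lintegral_abs_deriv_mul hst
      (fun x hx => (hf' x hx.2).mono inter_subset_right) (hf.mono inter_subset_right)]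
  exact setLIntegral_congr_fun hst fun x hx => hh x hx.2

def logistic4 (x : ℝ) : ℝ := 4 * x * (1 - x)

noncomputable def arcsineDensity (t : ℝ) : ℝ := 1 / (π * √(t * (1 - t)))

noncomputable def arcsineMeasure : Measure ℝ :=
  (volume.restrict (Icc 0 1)).withDensity fun t => ENNReal.ofReal (arcsineDensity t)

theorem continuous_logistic4 : Continuous logistic4 := by
  unfold logistic4; fun_prop

theorem hasDerivAt_logistic4 (x : ℝ) : HasDerivAt logistic4 (4 - 8 * x) x :=
  (((hasDerivAt_id' x).const_mul 4).mul ((hasDerivAt_const x 1).sub (hasDerivAt_id' x))).congr_deriv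
    (by simp only [Pi.sub_apply]; ring)

theorem strictMonoOn_logistic4 : StrictMonoOn logistic4 (Icc 0 (1 / 2)) := by
  intro a ha b hb hab
  have : 0 < (b - a) * (1 - a - b) := mul_pos (by linarith) (by linarith [hb.2, ha.2])
  unfold logistic4; nlinarith

theorem strictAntiOn_logistic4 : StrictAntiOn logistic4 (Icc (1 / 2) 1) := by
  intro a ha b hb hab
  have : 0 < (b - a) * (a + b - 1) := mul_pos (by linarith) (by linarith [ha.1, hb.1])
  unfold logistic4; nlinarith

theorem logistic4_image_Ioo_left : logistic4 '' Ioo 0 (1 / 2) = Ioo 0 1 := by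
  rw [continuous_logistic4.continuousOn.image_Ioo_of_strictMonoOn (by norm_num)
    strictMonoOn_logistic4]
  norm_num [logistic4]

theorem logistic4_image_Ioo_right : logistic4 '' Ioo (1 / 2) 1 = Ioo 0 1 := by
  rw [continuous_logistic4.continuousOn.image_Ioo_of_strictAntiOn (by norm_num)
    strictAntiOn_logistic4]
  norm_num [logistic4]

theorem sqrt_logistic4_mul_one_sub (x : ℝ) (hx : 0 ≤ x * (1 - x)) :
    √(logistic4 x * (1 - logistic4 x)) = 2 * |1 - 2 * x| * √(x * (1 - x)) := by
  rw [← sqrt_sq (by positivity : 0 ≤ 2 * |1 - 2 * x| * √(x * (1 - x))), mul_pow, mul_pow,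
    sq_abs, sq_sqrt hx]
  unfold logistic4; ring_nf

theorem abs_deriv_logistic4_mul_arcsineDensity {x : ℝ} (hx : x ∈ Ioo 0 1) (hx' : x ≠ 1 / 2) :
    |4 - 8 * x| * arcsineDensity (logistic4 x) = 2 * arcsineDensity x := by
  have hx₀ : 0 < x * (1 - x) := mul_pos hx.1 (by linarith [hx.2])
  have hu : 0 < √(x * (1 - x)) := sqrt_pos.2 hx₀
  have ha : 0 < |1 - 2 * x| := abs_pos.2 fun h => hx' (by linarith)
  have habs : |4 - 8 * x| = 4 * |1 - 2 * x| := by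
    rw [show 4 - 8 * x = 4 * (1 - 2 * x) by ring, abs_mul, abs_of_pos four_pos]
  rw [arcsineDensity, arcsineDensity, sqrt_logistic4_mul_one_sub x hx₀.le, habs]
  field_simp
  ring

theorem map_logistic4_arcsine_restrict {s : Set ℝ} (hs : MeasurableSet s) (hsub : s ⊆ Ioo 0 1)
    (hhalf : 1 / 2 ∉ s) (hinj : InjOn logistic4 s) (himage : logistic4 '' s = Ioo 0 1) :
    ((volume.restrict s).withDensity fun t => ENNReal.ofReal (arcsineDensity t)).map logistic4 =
      (2⁻¹ : ℝ≥0∞) • arcsineMeasure := by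
  rw [arcsineMeasure, ← Measure.restrict_congr_set Ioo_ae_eq_Icc,
    ← withDensity_smul _ (by unfold arcsineDensity; fun_prop), ← himage]
  refine map_withDensity_eq_withDensity_image hs
    (fun x _ => (hasDerivAt_logistic4 x).hasDerivWithinAt) hinj continuous_logistic4.measurable
    fun x hx => ?_
  have key := abs_deriv_logistic4_mul_arcsineDensity (hsub hx) (ne_of_mem_of_not_mem hx hhalf)
  rw [Pi.smul_apply, smul_eq_mul, mul_left_comm, ← ENNReal.ofReal_mul (abs_nonneg _), key,
    ENNReal.ofReal_mul zero_le_two, ENNReal.ofReal_ofNat, ← mul_assoc,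
    ENNReal.inv_mul_cancel two_ne_zero ENNReal.ofNat_ne_top, one_mul]

theorem arcsine_invariant_logistic4 :
    Measure.map (fun x : ℝ => 4 * x * (1 - x))
        ((volume.restrict (Set.Icc (0:ℝ) 1)).withDensity
          (fun t => ENNReal.ofReal (1 / (Real.pi * Real.sqrt (t * (1 - t)))))) =
      (volume.restrict (Set.Icc (0:ℝ) 1)).withDensity
        (fun t => ENNReal.ofReal (1 / (Real.pi * Real.sqrt (t * (1 - t))))) := by
  change arcsineMeasure.map logistic4 = arcsineMeasure
  have hsplit : (Ioo 0 (1 / 2) ∪ Ioo (1 / 2) 1 : Set ℝ) =ᵐ[volume] Icc 0 1 := by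
    refine (ae_eq_set_union Ioo_ae_eq_Ioc .rfl).trans ?_
    rw [Ioc_union_Ioo_eq_Ioo (by norm_num) (by norm_num)]
    exact Ioo_ae_eq_Icc
  have hdisj : Disjoint (Ioo (0 : ℝ) (1 / 2)) (Ioo (1 / 2) 1) :=
    Ico_disjoint_Ico_same.mono Ioo_subset_Ico_self Ioo_subset_Ico_self
  conv_lhs => rw [arcsineMeasure, ← Measure.restrict_congr_set hsplit,
    Measure.restrict_union hdisj measurableSet_Ioo, withDensity_add_measure,
    Measure.map_add _ _ continuous_logistic4.measurable]
  rw [map_logistic4_arcsine_restrict measurableSet_Ioo (Ioo_subset_Ioo_right (by norm_num))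
      (by simp) (strictMonoOn_logistic4.injOn.mono Ioo_subset_Icc_self) logistic4_image_Ioo_left,
    map_logistic4_arcsine_restrict measurableSet_Ioo (Ioo_subset_Ioo_left (by norm_num))
      (by simp) (strictAntiOn_logistic4.injOn.mono Ioo_subset_Icc_self) logistic4_image_Ioo_right,
    ← add_smul, ENNReal.inv_two_add_inv_two, one_smul]
end
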